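/- arXiv:1911.07400 — 6 statements merged into one kernel-verified Lean document; each statement's English description precedes it below -/
import Mathlib

section
/- If F : X ⊸ Y is a (κ,λ)-continuous multivalued function and g : Y → Z is a (λ,μ)-continuous single-valued function, then the multivalued function g ∘ F : X ⊸ Z given by (g∘F)(x) = g(F(x)) is (κ,μ)-continuous. -/
/-- The floor map `E_r` from the `r`-th subdivision (points represented by their
numerators `z`, standing for `z/r`) back to `ℤ^n`. -/
def subFloor {n : ℕ} (r : ℤ) (z : Fin n → ℤ) : Fin n → ℤ := fun i => Int.fdiv (z i) r

/-- The `r`-th subdivision of `X ⊆ ℤ^n`, with points represented by their numerators: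
`z` represents the point `z/r`, which belongs to `S(X,r)` iff its coordinatewise
floor `⌊z/r⌋` lies in `X`.  The adjacency induced on the subdivision is the
original adjacency applied to the numerators. -/
def subdiv {n : ℕ} (X : Set (Fin n → ℤ)) (r : ℤ) : Set (Fin n → ℤ) :=
  {z | subFloor r z ∈ X}

/-- A multivalued function `F : X ⊸ Y` is (κ,λ)-continuous if for some `r ≥ 1` it is
induced by a single-valued (κ,λ)-continuous function `f : S(X,r) → Y`, i.e.
`F x = f (E_r⁻¹ x)`. -/
def MVCont {n m : ℕ} (κ : (Fin n → ℤ) → (Fin n → ℤ) → Prop)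
    (lam : (Fin m → ℤ) → (Fin m → ℤ) → Prop)
    (X : Set (Fin n → ℤ)) (Y : Set (Fin m → ℤ))
    (F : (Fin n → ℤ) → Set (Fin m → ℤ)) : Prop :=
  ∃ r : ℤ, 1 ≤ r ∧ ∃ f : (Fin n → ℤ) → (Fin m → ℤ),
    (∀ z ∈ subdiv X r, f z ∈ Y) ∧
    (∀ z ∈ subdiv X r, ∀ z' ∈ subdiv X r, κ z z' → f z = f z' ∨ lam (f z) (f z')) ∧
    (∀ x ∈ X, F x = {y | ∃ z ∈ subdiv X r, subFloor r z = x ∧ f z = y})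

/-- Post-composing a continuous multivalued function with a continuous single-valued
function yields a continuous multivalued function. -/
theorem stmt3 {n m p : ℕ}
    (κ : (Fin n → ℤ) → (Fin n → ℤ) → Prop)
    (lam : (Fin m → ℤ) → (Fin m → ℤ) → Prop)
    (mu : (Fin p → ℤ) → (Fin p → ℤ) → Prop)
    (X : Set (Fin n → ℤ)) (Y : Set (Fin m → ℤ)) (Z : Set (Fin p → ℤ))
    (F : (Fin n → ℤ) → Set (Fin m → ℤ)) (g : (Fin m → ℤ) → (Fin p → ℤ))
    (hF : MVCont κ lam X Y F)
    (hgmaps : Set.MapsTo g Y Z)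
    (hgcont : ∀ y ∈ Y, ∀ y' ∈ Y, lam y y' → g y = g y' ∨ mu (g y) (g y')) :
    MVCont κ mu X Z (fun x => g '' F x) := by
  obtain ⟨r, hr, f, hfY, hfc, hfeq⟩ := hF
  refine ⟨r, hr, g ∘ f, fun z hz => hgmaps (hfY z hz), ?_, ?_⟩
  · intro z hz z' hz' hκ
    rcases hfc z hz z' hz' hκ with h | h
    · exact Or.inl (congrArg g h)
    · exact hgcont _ (hfY z hz) _ (hfY z' hz') h
  · intro x hx
    ext y
    simp only [Set.mem_image, hfeq x hx, Set.mem_setOf_eq, Function.comp]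
    constructor
    · rintro ⟨w, ⟨z, hz, hfl, rfl⟩, rfl⟩
      exact ⟨z, hz, hfl, rfl⟩
    · rintro ⟨z, hz, hfl, rfl⟩
      exact ⟨f z, ⟨z, hz, hfl, rfl⟩, rfl⟩
end

section
/- The digital interval ([a,b]_ℤ, c₁) has the approximate fixed point property for single-valued continuous functions: every function f : [a,b]_ℤ → [a,b]_ℤ with |f(x) - f(x+1)| ≤ 1 for all a ≤ x < b admits a point x with |f(x) - x| ≤ 1. -/
/-- The digital interval `([a,b]_ℤ, c₁)` has the AFPP_S: every `c₁`-continuous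
self-map has an approximate fixed point. -/
theorem stmt6 (a b : ℤ) (hab : a ≤ b) (f : ℤ → ℤ)
    (hmaps : ∀ x, a ≤ x → x ≤ b → a ≤ f x ∧ f x ≤ b)
    (hcont : ∀ x, a ≤ x → x < b → |f (x + 1) - f x| ≤ 1) :
    ∃ x, a ≤ x ∧ x ≤ b ∧ |f x - x| ≤ 1 := by
  have key : ∀ n : ℕ, a + n ≤ b →
      (∃ x, a ≤ x ∧ x ≤ a + n ∧ |f x - x| ≤ 1) ∨ a + n + 2 ≤ f (a + n) := by
    intro n
    induction n with
    | zero =>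
      intro h
      by_cases hfa : |f a - a| ≤ 1
      · exact Or.inl ⟨a, le_refl a, by simp, hfa⟩
      · right
        have h1 := (hmaps a le_rfl hab).1
        push_neg at hfa
        rw [lt_abs] at hfa
        simp only [Nat.cast_zero, add_zero]
        omega
    | succ n ih =>
      intro h
      have hn : a + n ≤ b := by push_cast at h ⊢; omega
      rcases ih hn with ⟨x, hx1, hx2, hx3⟩ | hbig
      · exact Or.inl ⟨x, hx1, by push_cast; omega, hx3⟩
      · have hlt : a + n < b := by push_cast at h; omega
        have hc := hcont (a + n) (by omega) hlt
        rw [abs_le] at hc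
        by_cases hcase : f (a + n + 1) ≤ a + n + 2
        · left
          refine ⟨a + n + 1, by omega, by push_cast; omega, ?_⟩
          rw [abs_le]
          omega
        · right
          have heq : a + ((n : ℤ) + 1) = a + n + 1 := by ring
          push_cast
          rw [heq]
          omega
  have hnb : a + ((b - a).toNat : ℤ) ≤ b := by omega
  rcases key (b - a).toNat hnb with ⟨x, hx1, hx2, hx3⟩ | hbig
  · exact ⟨x, hx1, by omega, hx3⟩
  · have := (hmaps (a + (b - a).toNat) (by omega) hnb).2
    omega
end

section
/- The digital interval ([a,b]_ℤ, c₁) has the approximate fixed point property for continuous multivalued functions: if f : S([a,b]_ℤ, r) → [a,b]_ℤ is a c₁-continuous function on the r-th subdivision (|f(t) − f(t+1/r)| ≤ 1 for consecutive subdivision points), inducing F(x) = f(E_r⁻¹(x)), then there exist x ∈ [a,b]_ℤ and y ∈ F(x) with |x − y| ≤ 1. -/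
/-- The digital interval `([a,b]_ℤ, c₁)` has the AFPP_M.  Subdivision points of
`S([a,b]_ℤ, r)` are represented by their numerators: `z : ℤ` stands for `z/r`, and
it lies in the subdivision iff `⌊z/r⌋ ∈ [a,b]_ℤ`; consecutive numerators are
adjacent.  If a `c₁`-continuous `f` on the subdivision induces the multivalued
`F(x) = f(E_r⁻¹ x)`, then some `x ∈ [a,b]_ℤ` and `y ∈ F(x)` satisfy `|x − y| ≤ 1`. -/
theorem stmt7 (a b : ℤ) (hab : a ≤ b) (r : ℤ) (hr : 1 ≤ r) (f : ℤ → ℤ)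
    (hmaps : ∀ z : ℤ, a ≤ Int.fdiv z r → Int.fdiv z r ≤ b → a ≤ f z ∧ f z ≤ b)
    (hcont : ∀ z : ℤ, (a ≤ Int.fdiv z r ∧ Int.fdiv z r ≤ b) →
      (a ≤ Int.fdiv (z + 1) r ∧ Int.fdiv (z + 1) r ≤ b) → |f (z + 1) - f z| ≤ 1) :
    ∃ x, a ≤ x ∧ x ≤ b ∧ ∃ z : ℤ, Int.fdiv z r = x ∧ |x - f z| ≤ 1 := by
  have hr0 : 0 < r := hr
  have hfd : ∀ z : ℤ, Int.fdiv z r = z / r := fun z => Int.fdiv_eq_ediv_of_nonneg z hr0.le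
  -- facts about z in range [a*r, b*r]
  have hin : ∀ z : ℤ, a * r ≤ z → z ≤ b * r → a ≤ Int.fdiv z r ∧ Int.fdiv z r ≤ b := by
    intro z h1 h2
    rw [hfd]
    constructor
    · exact (Int.le_ediv_iff_mul_le hr0).2 h1
    · calc z / r ≤ (b * r) / r := Int.ediv_le_ediv hr0 h2
        _ = b := Int.mul_ediv_cancel b hr0.ne'
  -- the key claim: for each n with a*r + n ≤ b*r, either a witness exists or g ≥ 2
  have key : ∀ n : ℕ, a * r + n ≤ b * r →
      (∃ x, a ≤ x ∧ x ≤ b ∧ ∃ z : ℤ, Int.fdiv z r = x ∧ |x - f z| ≤ 1) ∨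
      2 ≤ f (a * r + n) - Int.fdiv (a * r + n) r := by
    intro n
    induction n with
    | zero =>
      intro _
      simp only [Nat.cast_zero, add_zero]
      have hd : Int.fdiv (a * r) r = a := by
        rw [hfd]; exact Int.mul_ediv_cancel a hr0.ne'
      have hm := hmaps (a * r) (by rw [hd]) (by rw [hd]; exact hab)
      by_cases h : |a - f (a * r)| ≤ 1
      · exact Or.inl ⟨a, le_refl a, hab, a * r, hd, h⟩
      · right; rw [hd]; rw [abs_le] at h; push_neg at h; omega
    | succ n ih =>
      intro hle
      have hle' : a * r + (n : ℤ) ≤ b * r := by push_cast at hle ⊢; omega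
      rcases ih hle' with h | h
      · exact Or.inl h
      · set z := a * r + (n : ℤ) with hz
        have hz1 : a * r + ((n : ℕ) + 1 : ℕ) = z + 1 := by push_cast; ring
        have hzin := hin z (by omega) hle'
        have hz1in := hin (z + 1) (by omega) (by push_cast at hle; omega)
        have hc := hcont z hzin hz1in
        have hmono : Int.fdiv (z + 1) r ≤ Int.fdiv z r + 1 := by
          rw [hfd, hfd]
          calc (z + 1) / r ≤ (z + 1 * r) / r := Int.ediv_le_ediv hr0 (by omega)
            _ = z / r + 1 := Int.add_mul_ediv_right z 1 hr0.ne'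
        by_cases hw : |Int.fdiv (z + 1) r - f (z + 1)| ≤ 1
        · exact Or.inl ⟨Int.fdiv (z + 1) r, hz1in.1, hz1in.2, z + 1, rfl, hw⟩
        · right; rw [hz1]
          rw [abs_le] at hc
          rw [abs_le] at hw; push_neg at hw; omega
  -- apply at n = (b - a) * r, i.e. z = b * r
  have hn : ((b - a) * r).toNat = (b - a) * r := Int.toNat_of_nonneg (mul_nonneg (by omega) (by omega))
  rcases key ((b - a) * r).toNat (by rw [hn]; ring_nf; omega) with h | h
  · exact h
  · exfalso
    have hz : a * r + (((b - a) * r).toNat : ℤ) = b * r := by rw [hn]; ring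
    rw [hz] at h
    have hd : Int.fdiv (b * r) r = b := by rw [hfd]; exact Int.mul_ediv_cancel b hr0.ne'
    have hm := (hmaps (b * r) (by rw [hd]; omega) (by rw [hd])).2
    omega
end

section
/- (Rosenfeld) Let X = [0,n]_ℤ^v ⊆ ℤ^v. Every (c₁,c₁)-continuous function f : X → X has a point x such that f(x) = x or f(x) is c_v-adjacent to x, i.e., all coordinates of f(x) and x differ by at most 1 (so ‖f(x) − x‖_∞ ≤ 1). -/
/-- `c_u`-adjacency on `ℤ^v`: distinct points differing by exactly 1 in at most `u`
coordinates and agreeing in all other coordinates. -/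
def cuAdj {v : ℕ} (u : ℕ) (x y : Fin v → ℤ) : Prop :=
  x ≠ y ∧ (∀ i, |x i - y i| ≤ 1) ∧
    (Finset.univ.filter fun i => x i ≠ y i).card ≤ u

namespace Stmt8Aux

variable {v : ℕ}

/-- per-coordinate excess displacement -/
def pt (f : (Fin v → ℤ) → (Fin v → ℤ)) (x : Fin v → ℤ) (i : Fin v) : ℕ :=
  (f x i - x i).natAbs - 1

def phi (f : (Fin v → ℤ) → (Fin v → ℤ)) (x : Fin v → ℤ) : ℕ :=
  ∑ i, pt f x i

/-- per-coordinate room toward the wall, in the direction of displacement -/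
def rp (n : ℤ) (f : (Fin v → ℤ) → (Fin v → ℤ)) (x : Fin v → ℤ) (i : Fin v) : ℕ :=
  if 0 < f x i - x i then (n - f x i).toNat
  else if f x i - x i < 0 then (f x i).toNat else 0

def P (n : ℤ) (f : (Fin v → ℤ) → (Fin v → ℤ)) (x : Fin v → ℤ) : ℕ :=
  ∑ i, rp n f x i

def M (n : ℤ) (f : (Fin v → ℤ) → (Fin v → ℤ)) (x : Fin v → ℤ) : ℕ :=
  phi f x * (v * n.toNat + 1) + P n f x

lemma sum_split1 (g : Fin v → ℕ) (i : Fin v) :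
    ∑ k, g k = g i + ∑ k ∈ Finset.univ.erase i, g k :=
  (Finset.add_sum_erase _ _ (Finset.mem_univ i)).symm

lemma sum_split2 (g : Fin v → ℕ) (i j : Fin v) (hij : j ≠ i) :
    ∑ k, g k = g i + (g j + ∑ k ∈ (Finset.univ.erase i).erase j, g k) := by
  rw [sum_split1 g i,
    (Finset.add_sum_erase _ g (Finset.mem_erase.mpr ⟨hij, Finset.mem_univ _⟩)).symm]

lemma P_le (n : ℤ) (f : (Fin v → ℤ) → (Fin v → ℤ)) (x : Fin v → ℤ)
    (hfx : ∀ i, 0 ≤ f x i ∧ f x i ≤ n) : P n f x ≤ v * n.toNat := by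
  have h : ∀ i : Fin v, rp n f x i ≤ n.toNat := by
    intro i
    have := hfx i
    unfold rp
    split_ifs <;> omega
  calc P n f x ≤ ∑ _i : Fin v, n.toNat := Finset.sum_le_sum fun i _ => h i
    _ = v * n.toNat := by simp [Finset.sum_const, Finset.card_univ, mul_comm]

lemma M_lt_of_phi_lt (n : ℤ) (f : (Fin v → ℤ) → (Fin v → ℤ)) (x y : Fin v → ℤ)
    (hP : P n f y ≤ v * n.toNat) (h : phi f y < phi f x) : M n f y < M n f x := by
  unfold M
  have h1 : phi f y + 1 ≤ phi f x := h
  calc phi f y * (v * n.toNat + 1) + P n f y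
      < (phi f y + 1) * (v * n.toNat + 1) := by rw [add_mul, one_mul]; omega
    _ ≤ phi f x * (v * n.toNat + 1) := Nat.mul_le_mul_right _ h1
    _ ≤ phi f x * (v * n.toNat + 1) + P n f x := Nat.le_add_right _ _

lemma M_lt_of_tie (n : ℤ) (f : (Fin v → ℤ) → (Fin v → ℤ)) (x y : Fin v → ℤ)
    (hphi : phi f y = phi f x) (hP : P n f y < P n f x) : M n f y < M n f x := by
  unfold M; rw [hphi]; omega

lemma cuAdj_one_elim {a b : Fin v → ℤ} (h : cuAdj 1 a b) :
    ∃ j, (b j = a j + 1 ∨ b j = a j - 1) ∧ ∀ k, k ≠ j → b k = a k := by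
  obtain ⟨hne, hbd, hcard⟩ := h
  have hnonempty : ∃ j, a j ≠ b j := by
    by_contra hc
    push_neg at hc
    exact hne (funext hc)
  obtain ⟨j, hj⟩ := hnonempty
  refine ⟨j, ?_, ?_⟩
  · have := hbd j
    rw [abs_le] at this
    omega
  · intro k hk
    by_contra hc
    have hmemj : j ∈ Finset.univ.filter fun i => a i ≠ b i := by
      simp [hj]
    have hmemk : k ∈ Finset.univ.filter fun i => a i ≠ b i := by
      simp only [Finset.mem_filter]
      exact ⟨Finset.mem_univ k, fun h => hc h.symm⟩
    have hsub : ({j, k} : Finset (Fin v)) ⊆ Finset.univ.filter fun i => a i ≠ b i := by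
      intro z hz
      rcases Finset.mem_insert.mp hz with h1 | h1
      · exact h1 ▸ hmemj
      · exact (Finset.mem_singleton.mp h1) ▸ hmemk
    have : ({j, k} : Finset (Fin v)).card = 2 := Finset.card_pair (Ne.symm hk)
    have := Finset.card_le_card hsub
    omega

lemma step (n : ℤ) (hn : 0 ≤ n) (f : (Fin v → ℤ) → (Fin v → ℤ))
    (hmaps : ∀ x, (∀ i, 0 ≤ x i ∧ x i ≤ n) → ∀ i, 0 ≤ f x i ∧ f x i ≤ n)
    (hcont : ∀ x, (∀ i, 0 ≤ x i ∧ x i ≤ n) → ∀ x', (∀ i, 0 ≤ x' i ∧ x' i ≤ n) →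
      cuAdj 1 x x' → f x = f x' ∨ cuAdj 1 (f x) (f x'))
    (x : Fin v → ℤ) (hx : ∀ i, 0 ≤ x i ∧ x i ≤ n) (hphi : phi f x ≠ 0) :
    ∃ y, (∀ i, 0 ≤ y i ∧ y i ≤ n) ∧ M n f y < M n f x := by
  have hfx : ∀ i, 0 ≤ f x i ∧ f x i ≤ n := hmaps x hx
  -- find a coordinate with displacement ≥ 2
  have hex : ∃ i, pt f x i ≠ 0 := by
    by_contra hc
    push_neg at hc
    exact hphi (Finset.sum_eq_zero fun i _ => hc i)
  obtain ⟨i, hi⟩ := hex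
  have hd : 2 ≤ (f x i - x i).natAbs := by unfold pt at hi; omega
  set s : ℤ := if 0 < f x i - x i then 1 else -1 with hs_def
  have hscase : (2 ≤ f x i - x i ∧ s = 1) ∨ (f x i - x i ≤ -2 ∧ s = -1) := by
    by_cases h : 0 < f x i - x i
    · left; constructor; omega; simp [hs_def, h]; omega
    · right; constructor; omega; simp [hs_def, h]; omega
  set y : Fin v → ℤ := Function.update x i (x i + s) with hy_def
  have hyi : y i = x i + s := Function.update_self i (x i + s) x
  have hyk : ∀ k, k ≠ i → y k = x k := fun k hk => Function.update_of_ne hk _ _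
  have hy : ∀ k, 0 ≤ y k ∧ y k ≤ n := by
    intro k
    by_cases hk : k = i
    · subst hk
      rw [hyi]
      have h1 := hx k; have h2 := hfx k
      rcases hscase with ⟨h3, h4⟩ | ⟨h3, h4⟩ <;> rw [h4] <;> omega
    · rw [hyk k hk]; exact hx k
  have hfy : ∀ i, 0 ≤ f y i ∧ f y i ≤ n := hmaps y hy
  have hadj : cuAdj 1 x y := by
    refine ⟨?_, ?_, ?_⟩
    · intro h
      have := congrFun h i
      rw [hyi] at this
      rcases hscase with ⟨_, h4⟩ | ⟨_, h4⟩ <;> rw [h4] at this <;> omega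
    · intro k
      by_cases hk : k = i
      · subst hk
        rw [hyi]
        rcases hscase with ⟨_, h4⟩ | ⟨_, h4⟩ <;> rw [h4] <;> simp
      · rw [hyk k hk]; simp
    · have hsub : (Finset.univ.filter fun k => x k ≠ y k) ⊆ {i} := by
        intro k hk
        simp only [Finset.mem_filter] at hk
        rw [Finset.mem_singleton]
        by_contra hc
        exact hk.2 (hyk k hc).symm
      calc (Finset.univ.filter fun k => x k ≠ y k).card ≤ ({i} : Finset (Fin v)).card :=
            Finset.card_le_card hsub
        _ = 1 := Finset.card_singleton i
  -- the rest terms agree away from changed coordinates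
  rcases hcont x hx y hy hadj with hfeq | hfadj
  · -- f x = f y : coordinate i strictly improves
    have hkeq : ∀ k, k ≠ i → pt f y k = pt f x k := by
      intro k hk
      unfold pt
      rw [← hfeq, hyk k hk]
    have hpti : pt f y i < pt f x i := by
      unfold pt
      rw [← hfeq, hyi]
      rcases hscase with ⟨h3, h4⟩ | ⟨h3, h4⟩ <;> rw [h4] <;> omega
    have hre : (∑ k ∈ Finset.univ.erase i, pt f y k)
        = ∑ k ∈ Finset.univ.erase i, pt f x k :=
      Finset.sum_congr rfl fun k hk => hkeq k (Finset.mem_erase.mp hk).1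
    have hlt : phi f y < phi f x := by
      unfold phi
      rw [sum_split1 (pt f y) i, sum_split1 (pt f x) i, hre]
      omega
    exact ⟨y, hy, M_lt_of_phi_lt n f x y (P_le n f y hfy) hlt⟩
  · obtain ⟨j, hj1, hj2⟩ := cuAdj_one_elim hfadj
    by_cases hji : j = i
    · subst hji
      -- only coordinate j = i changes in both x and f
      have hkeq : ∀ k, k ≠ j → pt f y k = pt f x k := by
        intro k hk
        unfold pt
        rw [hj2 k hk, hyk k hk]
      have hkeq' : ∀ k, k ≠ j → rp n f y k = rp n f x k := by
        intro k hk
        unfold rp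
        rw [hj2 k hk, hyk k hk]
      rcases hscase with ⟨h3, h4⟩ | ⟨h3, h4⟩ <;> rcases hj1 with h5 | h5
      -- four subcases; two ties (f moves along), two strict
      · -- s = 1, f y j = f x j + 1 : tie
        have hptj : pt f y j = pt f x j := by
          unfold pt; rw [h5, hyi, h4]; omega
        have hrpj : rp n f y j < rp n f x j := by
          have h6 := hfy j
          unfold rp
          rw [h5, hyi, h4]
          have c1 : 0 < f x j + 1 - (x j + 1) := by omega
          have c2 : 0 < f x j - x j := by omega
          rw [if_pos c1, if_pos c2]
          omega
        have hphieq : phi f y = phi f x := by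
          unfold phi
          exact Finset.sum_congr rfl fun k _ => by
            by_cases hk : k = j
            · rw [hk]; exact hptj
            · exact hkeq k hk
        have hre : (∑ k ∈ Finset.univ.erase j, rp n f y k)
            = ∑ k ∈ Finset.univ.erase j, rp n f x k :=
          Finset.sum_congr rfl fun k hk => hkeq' k (Finset.mem_erase.mp hk).1
        have hPlt : P n f y < P n f x := by
          unfold P
          rw [sum_split1 (rp n f y) j, sum_split1 (rp n f x) j, hre]
          omega
        exact ⟨y, hy, M_lt_of_tie n f x y hphieq hPlt⟩
      · -- s = 1, f y j = f x j - 1 : strict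
        have hptj : pt f y j < pt f x j := by
          unfold pt; rw [h5, hyi, h4]; omega
        have hre : (∑ k ∈ Finset.univ.erase j, pt f y k)
            = ∑ k ∈ Finset.univ.erase j, pt f x k :=
          Finset.sum_congr rfl fun k hk => hkeq k (Finset.mem_erase.mp hk).1
        have hlt : phi f y < phi f x := by
          unfold phi
          rw [sum_split1 (pt f y) j, sum_split1 (pt f x) j, hre]
          omega
        exact ⟨y, hy, M_lt_of_phi_lt n f x y (P_le n f y hfy) hlt⟩
      · -- s = -1, f y j = f x j + 1 : strict
        have hptj : pt f y j < pt f x j := by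
          unfold pt; rw [h5, hyi, h4]; omega
        have hre : (∑ k ∈ Finset.univ.erase j, pt f y k)
            = ∑ k ∈ Finset.univ.erase j, pt f x k :=
          Finset.sum_congr rfl fun k hk => hkeq k (Finset.mem_erase.mp hk).1
        have hlt : phi f y < phi f x := by
          unfold phi
          rw [sum_split1 (pt f y) j, sum_split1 (pt f x) j, hre]
          omega
        exact ⟨y, hy, M_lt_of_phi_lt n f x y (P_le n f y hfy) hlt⟩
      · -- s = -1, f y j = f x j - 1 : tie
        have hptj : pt f y j = pt f x j := by
          unfold pt; rw [h5, hyi, h4]; omega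
        have hrpj : rp n f y j < rp n f x j := by
          have h6 := hfy j
          unfold rp
          rw [h5, hyi, h4]
          have c1 : ¬ (0 < f x j - 1 - (x j + -1)) := by omega
          have c2 : ¬ (0 < f x j - x j) := by omega
          have c3 : f x j - 1 - (x j + -1) < 0 := by omega
          have c4 : f x j - x j < 0 := by omega
          rw [if_neg c1, if_neg c2, if_pos c3, if_pos c4]
          omega
        have hphieq : phi f y = phi f x := by
          unfold phi
          exact Finset.sum_congr rfl fun k _ => by
            by_cases hk : k = j
            · rw [hk]; exact hptj
            · exact hkeq k hk
        have hre : (∑ k ∈ Finset.univ.erase j, rp n f y k)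
            = ∑ k ∈ Finset.univ.erase j, rp n f x k :=
          Finset.sum_congr rfl fun k hk => hkeq' k (Finset.mem_erase.mp hk).1
        have hPlt : P n f y < P n f x := by
          unfold P
          rw [sum_split1 (rp n f y) j, sum_split1 (rp n f x) j, hre]
          omega
        exact ⟨y, hy, M_lt_of_tie n f x y hphieq hPlt⟩
    · -- j ≠ i : f changes at j, x changes at i
      have hij : (i : Fin v) ≠ j := fun h => hji h.symm
      have hfyi : f y i = f x i := hj2 i hij
      have hyj : y j = x j := hyk j hji
      have hkeq : ∀ k, k ≠ i → k ≠ j → pt f y k = pt f x k := by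
        intro k hk1 hk2
        unfold pt
        rw [hj2 k hk2, hyk k hk1]
      have hkeq' : ∀ k, k ≠ i → k ≠ j → rp n f y k = rp n f x k := by
        intro k hk1 hk2
        unfold rp
        rw [hj2 k hk2, hyk k hk1]
      -- coordinate i : pt decreases by exactly 1, rp unchanged
      have hpti : pt f y i + 1 = pt f x i := by
        unfold pt
        rw [hfyi, hyi]
        rcases hscase with ⟨h3, h4⟩ | ⟨h3, h4⟩ <;> rw [h4] <;> omega
      have hrpi : rp n f y i = rp n f x i := by
        unfold rp
        rw [hfyi, hyi]
        rcases hscase with ⟨h3, h4⟩ | ⟨h3, h4⟩ <;> rw [h4]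
        · have c1 : 0 < f x i - (x i + 1) := by omega
          have c2 : 0 < f x i - x i := by omega
          rw [if_pos c1, if_pos c2]
        · have c1 : ¬ (0 < f x i - (x i + -1)) := by omega
          have c2 : ¬ (0 < f x i - x i) := by omega
          have c3 : f x i - (x i + -1) < 0 := by omega
          have c4 : f x i - x i < 0 := by omega
          rw [if_neg c1, if_neg c2, if_pos c3, if_pos c4]
      -- coordinate j : either pt doesn't increase (strict) or tie with rp decreasing
      have hkey : pt f y j ≤ pt f x j ∨
          (pt f y j = pt f x j + 1 ∧ rp n f y j < rp n f x j) := by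
        have h6 := hfy j
        rcases lt_trichotomy (f x j - x j) 0 with he | he | he
        · rcases hj1 with h5 | h5
          · left; unfold pt; rw [h5, hyj]; omega
          · right
            constructor
            · unfold pt; rw [h5, hyj]; omega
            · unfold rp
              rw [h5, hyj]
              have c1 : ¬ (0 < f x j - 1 - x j) := by omega
              have c2 : ¬ (0 < f x j - x j) := by omega
              have c3 : f x j - 1 - x j < 0 := by omega
              rw [if_neg c1, if_neg c2, if_pos c3, if_pos he]
              omega
        · left; unfold pt; rcases hj1 with h5 | h5 <;> rw [h5, hyj] <;> omega
        · rcases hj1 with h5 | h5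
          · right
            constructor
            · unfold pt; rw [h5, hyj]; omega
            · unfold rp
              rw [h5, hyj]
              have c1 : 0 < f x j + 1 - x j := by omega
              rw [if_pos c1, if_pos he]
              omega
          · left; unfold pt; rw [h5, hyj]; omega
      have hsplitpt_y := sum_split2 (pt f y) i j hji
      have hsplitpt_x := sum_split2 (pt f x) i j hji
      have hsplitrp_y := sum_split2 (rp n f y) i j hji
      have hsplitrp_x := sum_split2 (rp n f x) i j hji
      have hrest_pt : (∑ k ∈ (Finset.univ.erase i).erase j, pt f y k)
          = ∑ k ∈ (Finset.univ.erase i).erase j, pt f x k := by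
        refine Finset.sum_congr rfl fun k hk => ?_
        have hk' := Finset.mem_erase.mp hk
        have hk'' := Finset.mem_erase.mp hk'.2
        exact hkeq k hk''.1 hk'.1
      have hrest_rp : (∑ k ∈ (Finset.univ.erase i).erase j, rp n f y k)
          = ∑ k ∈ (Finset.univ.erase i).erase j, rp n f x k := by
        refine Finset.sum_congr rfl fun k hk => ?_
        have hk' := Finset.mem_erase.mp hk
        have hk'' := Finset.mem_erase.mp hk'.2
        exact hkeq' k hk''.1 hk'.1
      rcases hkey with hkey | ⟨hkey1, hkey2⟩
      · -- strict decrease of phi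
        have hlt : phi f y < phi f x := by
          unfold phi
          rw [hsplitpt_y, hsplitpt_x, hrest_pt]
          omega
        exact ⟨y, hy, M_lt_of_phi_lt n f x y (P_le n f y hfy) hlt⟩
      · -- tie : phi equal, P strictly decreases
        have hphieq : phi f y = phi f x := by
          unfold phi
          rw [hsplitpt_y, hsplitpt_x, hrest_pt]
          omega
        have hPlt : P n f y < P n f x := by
          unfold P
          rw [hsplitrp_y, hsplitrp_x, hrest_rp]
          omega
        exact ⟨y, hy, M_lt_of_tie n f x y hphieq hPlt⟩

end Stmt8Aux

/-- (Rosenfeld) Every `(c₁,c₁)`-continuous self-map of the digital cube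
`[0,n]_ℤ^v` has a point `x` with `‖f x − x‖_∞ ≤ 1`, i.e. `f x = x` or `f x` is
`c_v`-adjacent to `x`. -/
theorem stmt8 (v : ℕ) (n : ℤ) (hn : 0 ≤ n)
    (X : Set (Fin v → ℤ)) (hX : X = {x | ∀ i, 0 ≤ x i ∧ x i ≤ n})
    (f : (Fin v → ℤ) → (Fin v → ℤ)) (hmaps : Set.MapsTo f X X)
    (hcont : ∀ x ∈ X, ∀ x' ∈ X, cuAdj 1 x x' → f x = f x' ∨ cuAdj 1 (f x) (f x')) :
    ∃ x ∈ X, ∀ i, |f x i - x i| ≤ 1 := by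
  subst hX
  have hmem : ∀ z : Fin v → ℤ, z ∈ {x : Fin v → ℤ | ∀ i, 0 ≤ x i ∧ x i ≤ n} ↔
      (∀ i, 0 ≤ z i ∧ z i ≤ n) := fun z => Iff.rfl
  have hmaps' : ∀ x, (∀ i, 0 ≤ x i ∧ x i ≤ n) → ∀ i, 0 ≤ f x i ∧ f x i ≤ n :=
    fun x hx => hmaps hx
  have hcont' : ∀ x, (∀ i, 0 ≤ x i ∧ x i ≤ n) → ∀ x', (∀ i, 0 ≤ x' i ∧ x' i ≤ n) →
      cuAdj 1 x x' → f x = f x' ∨ cuAdj 1 (f x) (f x') :=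
    fun x hx x' hx' h => hcont x hx x' hx' h
  have main : ∀ N : ℕ, ∀ x : Fin v → ℤ, (∀ i, 0 ≤ x i ∧ x i ≤ n) →
      Stmt8Aux.M n f x ≤ N → ∃ z, (∀ i, 0 ≤ z i ∧ z i ≤ n) ∧ Stmt8Aux.phi f z = 0 := by
    intro N
    induction N with
    | zero =>
      intro x hx hM
      by_cases hphi : Stmt8Aux.phi f x = 0
      · exact ⟨x, hx, hphi⟩
      · obtain ⟨y, hy, hlt⟩ := Stmt8Aux.step n hn f hmaps' hcont' x hx hphi
        omega
    | succ N ih =>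
      intro x hx hM
      by_cases hphi : Stmt8Aux.phi f x = 0
      · exact ⟨x, hx, hphi⟩
      · obtain ⟨y, hy, hlt⟩ := Stmt8Aux.step n hn f hmaps' hcont' x hx hphi
        exact ih y hy (by omega)
  have h0 : ∀ i : Fin v, 0 ≤ (fun _ : Fin v => (0 : ℤ)) i ∧ (fun _ : Fin v => (0 : ℤ)) i ≤ n :=
    fun i => ⟨le_refl 0, hn⟩
  obtain ⟨z, hz, hzphi⟩ := main (Stmt8Aux.M n f (fun _ => 0)) (fun _ => 0) h0 le_rfl
  refine ⟨z, hz, ?_⟩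
  intro i
  have : Stmt8Aux.pt f z i = 0 := by
    have := Finset.sum_eq_zero_iff.mp hzphi i (Finset.mem_univ i)
    exact this
  unfold Stmt8Aux.pt at this
  rw [Int.abs_eq_natAbs]
  omega
end

section
/- Let X = ∏_{i=1}^v [a_i,b_i]_ℤ ⊆ ℤ^v and 1 ≤ u ≤ v. Every (c_u,c₁)-continuous function f : X → X admits x ∈ X with ‖f(x) − x‖_∞ ≤ 1. -/
open Finset

private def sg (d : ℤ) : ℤ := if 0 < d then 1 else if d < 0 then -1 else 0

private def Phi {v : ℕ} (f : (Fin v → ℤ) → (Fin v → ℤ)) (x : Fin v → ℤ) : ℤ :=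
  ∑ i, |f x i - x i|

private def Tm {v : ℕ} (a b : Fin v → ℤ) (f : (Fin v → ℤ) → (Fin v → ℤ))
    (x : Fin v → ℤ) (k : Fin v) : ℤ :=
  if f x k = x k then -(b k - a k + 2)
  else sg (f x k - x k) * (x k + f x k - a k - b k)

private def Psi {v : ℕ} (a b : Fin v → ℤ) (f : (Fin v → ℤ) → (Fin v → ℤ))
    (x : Fin v → ℤ) : ℤ := ∑ k, Tm a b f x k

private lemma psi_le {v : ℕ} (a b : Fin v → ℤ) (hab : ∀ i, a i ≤ b i)
    (f : (Fin v → ℤ) → (Fin v → ℤ)) (x : Fin v → ℤ)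
    (hx : ∀ i, a i ≤ x i ∧ x i ≤ b i) (hfx : ∀ i, a i ≤ f x i ∧ f x i ≤ b i) :
    Psi a b f x ≤ ∑ k, (b k - a k) := by
  apply Finset.sum_le_sum
  intro k _
  have h1 := hx k; have h2 := hfx k; have h3 := hab k
  unfold Tm sg
  split_ifs <;> omega

private lemma step_lemma {v u : ℕ} (hu1 : 1 ≤ u) (a b : Fin v → ℤ)
    (X : Set (Fin v → ℤ)) (hX : X = {x | ∀ i, a i ≤ x i ∧ x i ≤ b i})
    (f : (Fin v → ℤ) → (Fin v → ℤ)) (hmaps : Set.MapsTo f X X)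
    (hcont : ∀ x ∈ X, ∀ x' ∈ X, cuAdj u x x' → f x = f x' ∨ cuAdj 1 (f x) (f x'))
    (x : Fin v → ℤ) (hx : x ∈ X) (hmin : ∀ z ∈ X, Phi f x ≤ Phi f z)
    (i : Fin v) (h2 : 2 ≤ |f x i - x i|) :
    ∃ y, y ∈ X ∧ (∀ z ∈ X, Phi f y ≤ Phi f z) ∧ Psi a b f x + 2 ≤ Psi a b f y := by
  have hxm : ∀ k, a k ≤ x k ∧ x k ≤ b k := by rw [hX] at hx; exact hx
  have hfxm : ∀ k, a k ≤ f x k ∧ f x k ≤ b k := by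
    have := hmaps hx; rw [hX] at this; exact this
  set s : ℤ := if x i < f x i then 1 else -1 with hsdef
  have hs : (s = 1 ∧ x i + 2 ≤ f x i) ∨ (s = -1 ∧ f x i + 2 ≤ x i) := by
    simp only [Int.abs_eq_natAbs] at h2
    rw [hsdef]; split_ifs with h
    · left; omega
    · right; omega
  set y : Fin v → ℤ := Function.update x i (x i + s) with hydef
  have hyi : y i = x i + s := Function.update_self i _ x
  have hyk : ∀ k, k ≠ i → y k = x k := fun k hk => Function.update_of_ne hk _ x
  have hyX : y ∈ X := by
    rw [hX]; intro k
    by_cases hk : k = i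
    · subst hk; rw [hyi]
      have := hxm k; have := hfxm k
      rcases hs with ⟨h1, h2'⟩ | ⟨h1, h2'⟩ <;> omega
    · rw [hyk k hk]; exact hxm k
  have hym : ∀ k, a k ≤ y k ∧ y k ≤ b k := by rw [hX] at hyX; exact hyX
  have hfym : ∀ k, a k ≤ f y k ∧ f y k ≤ b k := by
    have := hmaps hyX; rw [hX] at this; exact this
  -- adjacency
  have hxyne : x ≠ y := by
    intro h
    have := congrFun h i
    rw [hyi] at this
    rcases hs with ⟨h1, _⟩ | ⟨h1, _⟩ <;> omega
  have hadj : cuAdj u x y := by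
    refine ⟨hxyne, ?_, ?_⟩
    · intro k
      by_cases hk : k = i
      · subst hk; rw [hyi]
        rcases hs with ⟨h1, _⟩ | ⟨h1, _⟩ <;> rw [h1] <;> simp
      · rw [hyk k hk]; simp
    · have hsub : (Finset.univ.filter fun k => x k ≠ y k) ⊆ {i} := by
        intro k hk
        simp only [Finset.mem_filter, Finset.mem_univ, true_and] at hk
        simp only [Finset.mem_singleton]
        by_contra hne
        exact hk (hyk k hne).symm
      calc (Finset.univ.filter fun k => x k ≠ y k).card ≤ ({i} : Finset (Fin v)).card :=
            Finset.card_le_card hsub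
        _ = 1 := Finset.card_singleton i
        _ ≤ u := hu1
  -- Σ_j |f x j - y j| = Phi f x - 1
  have hsum1 : ∑ j, |f x j - y j| = Phi f x - 1 := by
    have h0 : ∑ j, (|f x j - y j| - |f x j - x j|) = -1 := by
      rw [Finset.sum_eq_single i]
      · rw [hyi]
        rcases hs with ⟨h1, h2'⟩ | ⟨h1, h2'⟩ <;> rw [h1] <;>
          simp only [Int.abs_eq_natAbs] <;> omega
      · intro k _ hk; rw [hyk k hk]; ring
      · exact fun h => absurd (Finset.mem_univ i) h
    rw [Finset.sum_sub_distrib] at h0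
    unfold Phi at *
    omega
  have hminy := hmin y hyX
  rcases hcont x hx y hyX hadj with heq | ⟨hfne, hfle, hfcard⟩
  · exfalso
    have : Phi f y = ∑ k, |f x k - y k| :=
      Finset.sum_congr rfl fun k _ => by rw [heq]
    omega
  · -- extract the unique changed coordinate j of f
    have hne' : (Finset.univ.filter fun k => f x k ≠ f y k).Nonempty := by
      by_contra h
      rw [Finset.not_nonempty_iff_eq_empty, Finset.filter_eq_empty_iff] at h
      exact hfne (funext fun k => not_not.mp (h (Finset.mem_univ k)))
    obtain ⟨j, hj⟩ := hne'
    have hjonly : ∀ k, k ≠ j → f y k = f x k := by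
      have hcard1 : (Finset.univ.filter fun k => f x k ≠ f y k).card = 1 :=
        le_antisymm hfcard (Finset.card_pos.mpr ⟨j, hj⟩)
      obtain ⟨c, hc⟩ := Finset.card_eq_one.mp hcard1
      have hjc : j = c := by rwa [hc, Finset.mem_singleton] at hj
      intro k hk
      by_contra hne2
      have : k ∈ Finset.univ.filter fun k => f x k ≠ f y k := by
        simp only [Finset.mem_filter, Finset.mem_univ, true_and]
        exact fun h => hne2 h.symm
      rw [hc, Finset.mem_singleton] at this
      exact hk (this.trans hjc.symm)
    set σ : ℤ := f y j - f x j with hσdef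
    have hσ1 : |σ| ≤ 1 := by
      have := hfle j
      simp only [Int.abs_eq_natAbs] at this ⊢
      omega
    have hσne : σ ≠ 0 := by
      intro h
      refine hfne (funext fun k => ?_)
      by_cases hk : k = j
      · subst hk; omega
      · exact (hjonly k hk).symm
    have hfyj : f y j = f x j + σ := by omega
    -- Phi equality and retreat
    have hsum2 : Phi f y - (∑ k, |f x k - y k|) = |f y j - y j| - |f x j - y j| := by
      unfold Phi
      rw [← Finset.sum_sub_distrib]
      rw [Finset.sum_eq_single j]
      · intro k _ hk; rw [hjonly k hk]; ring
      · exact fun h => absurd (Finset.mem_univ j) h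
    have htri : |f y j - y j| ≤ |f x j - y j| + 1 := by
      simp only [Int.abs_eq_natAbs] at hσ1 ⊢
      omega
    have hboth : Phi f y = Phi f x ∧ |f y j - y j| = |f x j - y j| + 1 := by
      simp only [Int.abs_eq_natAbs] at hsum1 hsum2 htri ⊢
      omega
    obtain ⟨hPhieq, hkeyj⟩ := hboth
    have hsign : (σ = 1 ∧ 0 ≤ f x j - y j) ∨ (σ = -1 ∧ f x j - y j ≤ 0) := by
      simp only [Int.abs_eq_natAbs] at hkeyj hσ1
      omega
    -- Psi increase
    refine ⟨y, hyX, fun z hz => hPhieq ▸ hmin z hz, ?_⟩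
    have hTmeq : ∀ k, k ≠ i → k ≠ j → Tm a b f y k - Tm a b f x k = 0 := by
      intro k hki hkj
      unfold Tm
      rw [hjonly k hkj, hyk k hki]
      ring
    have habs2 : (s = 1 ∧ x i + 2 ≤ f x i) ∨ (s = -1 ∧ f x i + 2 ≤ x i) := hs
    by_cases hji : j = i
    · subst hji
      have hsum3 : ∑ k, (Tm a b f y k - Tm a b f x k) = Tm a b f y j - Tm a b f x j := by
        rw [Finset.sum_eq_single j]
        · intro k _ hk; exact hTmeq k hk hk
        · exact fun h => absurd (Finset.mem_univ j) h
      have hdiff : Tm a b f y j - Tm a b f x j = 2 := by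
        unfold Tm sg
        rw [hfyj, hyi]
        rw [hyi] at hsign
        rcases habs2 with ⟨h1, h2'⟩ | ⟨h1, h2'⟩ <;> rcases hsign with ⟨hg1, hg2⟩ | ⟨hg1, hg2⟩ <;>
          split_ifs <;> omega
      have : Psi a b f y - Psi a b f x = 2 := by
        unfold Psi
        rw [← Finset.sum_sub_distrib, hsum3, hdiff]
      omega
    · have hij : i ≠ j := fun h => hji h.symm
      have hsum3 : ∑ k, (Tm a b f y k - Tm a b f x k)
          = (Tm a b f y i - Tm a b f x i) + (Tm a b f y j - Tm a b f x j) := by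
        rw [← Finset.sum_subset (Finset.subset_univ {i, j}) (fun k _ hk => ?_),
          Finset.sum_pair hij]
        simp only [Finset.mem_insert, Finset.mem_singleton, not_or] at hk
        exact hTmeq k hk.1 hk.2
      have hdiffi : Tm a b f y i - Tm a b f x i = 1 := by
        unfold Tm sg
        rw [hjonly i hij, hyi]
        rcases habs2 with ⟨h1, h2'⟩ | ⟨h1, h2'⟩ <;> split_ifs <;> omega
      have hdiffj : 1 ≤ Tm a b f y j - Tm a b f x j := by
        unfold Tm sg
        rw [hfyj, hyk j (fun h => hij h.symm)]
        rw [hyk j (fun h => hij h.symm)] at hsign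
        have hb1 := hxm j
        rcases hsign with ⟨hg1, hg2⟩ | ⟨hg1, hg2⟩ <;> split_ifs <;> omega
      have : Psi a b f y - Psi a b f x = (Tm a b f y i - Tm a b f x i) + (Tm a b f y j - Tm a b f x j) := by
        unfold Psi
        rw [← Finset.sum_sub_distrib, hsum3]
      omega

/-- Every `(c_u,c₁)`-continuous self-map of a digital box `∏ [a_i,b_i]_ℤ ⊆ ℤ^v`
(`1 ≤ u ≤ v`) has a point `x` with `‖f x − x‖_∞ ≤ 1`. -/
theorem stmt9 (v u : ℕ) (hu1 : 1 ≤ u) (huv : u ≤ v)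
    (a b : Fin v → ℤ) (hab : ∀ i, a i ≤ b i)
    (X : Set (Fin v → ℤ)) (hX : X = {x | ∀ i, a i ≤ x i ∧ x i ≤ b i})
    (f : (Fin v → ℤ) → (Fin v → ℤ)) (hmaps : Set.MapsTo f X X)
    (hcont : ∀ x ∈ X, ∀ x' ∈ X, cuAdj u x x' → f x = f x' ∨ cuAdj 1 (f x) (f x')) :
    ∃ x ∈ X, ∀ i, |f x i - x i| ≤ 1 := by
  by_contra hcon
  push_neg at hcon
  -- hcon : ∀ x ∈ X, ∃ i, 1 < |f x i - x i|
  have hXIcc : ∀ z, z ∈ X ↔ z ∈ Finset.Icc a b := by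
    intro z
    rw [hX, Finset.mem_Icc]
    constructor
    · intro h; exact ⟨fun i => (h i).1, fun i => (h i).2⟩
    · intro h i; exact ⟨h.1 i, h.2 i⟩
  have hne : (Finset.Icc a b).Nonempty := ⟨a, Finset.mem_Icc.mpr ⟨le_refl a, fun i => hab i⟩⟩
  obtain ⟨x₀, hx₀, hx₀min⟩ := Finset.exists_min_image (Finset.Icc a b) (Phi f) hne
  have hx₀X : x₀ ∈ X := (hXIcc x₀).mpr hx₀
  have hx₀min' : ∀ z ∈ X, Phi f x₀ ≤ Phi f z := fun z hz => hx₀min z ((hXIcc z).mp hz)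
  have hstep : ∀ x, x ∈ X → (∀ z ∈ X, Phi f x ≤ Phi f z) →
      ∃ y, y ∈ X ∧ (∀ z ∈ X, Phi f y ≤ Phi f z) ∧ Psi a b f x + 2 ≤ Psi a b f y := by
    intro x hxX hxmin
    obtain ⟨i, hi⟩ := hcon x hxX
    have h2 : 2 ≤ |f x i - x i| := by omega
    exact step_lemma hu1 a b X hX f hmaps hcont x hxX hxmin i h2
  choose! g hg1 hg2 hg3 using hstep
  have key : ∀ n : ℕ, (g^[n] x₀ ∈ X ∧ ∀ z ∈ X, Phi f (g^[n] x₀) ≤ Phi f z) ∧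
      Psi a b f x₀ + 2 * n ≤ Psi a b f (g^[n] x₀) := by
    intro n
    induction n with
    | zero => exact ⟨⟨hx₀X, hx₀min'⟩, by simp⟩
    | succ m ih =>
      obtain ⟨⟨hmem, hmn⟩, hpsi⟩ := ih
      rw [Function.iterate_succ_apply']
      refine ⟨⟨hg1 _ hmem hmn, hg2 _ hmem hmn⟩, ?_⟩
      have := hg3 _ hmem hmn
      push_cast
      push_cast at hpsi
      omega
  have hbd : ∀ n : ℕ, Psi a b f (g^[n] x₀) ≤ ∑ k, (b k - a k) := by
    intro n
    obtain ⟨⟨hmem, _⟩, _⟩ := key n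
    have h1 : ∀ i, a i ≤ g^[n] x₀ i ∧ g^[n] x₀ i ≤ b i := by rw [hX] at hmem; exact hmem
    have h2 : ∀ i, a i ≤ f (g^[n] x₀) i ∧ f (g^[n] x₀) i ≤ b i := by
      have := hmaps hmem; rw [hX] at this; exact this
    exact psi_le a b hab f _ h1 h2
  set N : ℕ := (∑ k, (b k - a k) - Psi a b f x₀).toNat + 1 with hN
  have h1 := (key N).2
  have h2 := hbd N
  omega
end

section
/- Let v > 1, X = [0,1]_ℤ^v ⊆ ℤ^v, and 1 ≤ u ≤ v−1. The antipodal map F(x₁,...,x_v) = (1−x₁, ..., 1−x_v) is (c_u,c_u)-continuous but has no c_u-approximate fixed point: for every x ∈ X, F(x) ≠ x and F(x) is not c_u-adjacent to x. Hence (X, c_u) does not have the AFPP_S. -/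
/-- On `X = [0,1]_ℤ^v` with `v > 1` and `1 ≤ u ≤ v − 1`, the antipodal map
`F(x) = (1−x₁,…,1−x_v)` is `(c_u,c_u)`-continuous but has no `c_u`-approximate
fixed point; hence `(X, c_u)` fails the AFPP_S. -/
theorem stmt12 (v u : ℕ) (hv : 1 < v) (hu1 : 1 ≤ u) (huv : u ≤ v - 1)
    (X : Set (Fin v → ℤ)) (hX : X = {x | ∀ i, x i = 0 ∨ x i = 1})
    (F : (Fin v → ℤ) → (Fin v → ℤ)) (hFdef : F = fun x i => 1 - x i) :
    Set.MapsTo F X X ∧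
    (∀ x ∈ X, ∀ x' ∈ X, cuAdj u x x' → F x = F x' ∨ cuAdj u (F x) (F x')) ∧
    (∀ x ∈ X, F x ≠ x ∧ ¬ cuAdj u x (F x)) ∧
    ¬ (∀ f : (Fin v → ℤ) → (Fin v → ℤ), Set.MapsTo f X X →
        (∀ x ∈ X, ∀ x' ∈ X, cuAdj u x x' → f x = f x' ∨ cuAdj u (f x) (f x')) →
        ∃ x ∈ X, f x = x ∨ cuAdj u x (f x)) := by
  subst hX hFdef
  have hmaps : Set.MapsTo (fun x i => 1 - x i) {x : Fin v → ℤ | ∀ i, x i = 0 ∨ x i = 1}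
      {x | ∀ i, x i = 0 ∨ x i = 1} := by
    intro x hx i
    rcases hx i with h | h <;> simp [h]
  have hcont : ∀ x ∈ {x : Fin v → ℤ | ∀ i, x i = 0 ∨ x i = 1},
      ∀ x' ∈ {x : Fin v → ℤ | ∀ i, x i = 0 ∨ x i = 1}, cuAdj u x x' →
      (fun i => 1 - x i) = (fun i => 1 - x' i) ∨
        cuAdj u (fun i => 1 - x i) (fun i => 1 - x' i) := by
    intro x _ x' _ ⟨hne, hd, hc⟩
    right
    refine ⟨?_, ?_, ?_⟩
    · intro h
      apply hne
      funext i
      have := congrFun h i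
      simp at this
      linarith
    · intro i
      have := hd i
      have : |x' i - x i| ≤ 1 := by rwa [abs_sub_comm]
      calc |(1 - x i) - (1 - x' i)| = |x' i - x i| := by ring_nf
        _ ≤ 1 := this
    · refine le_trans (le_of_eq ?_) hc
      congr 1
      apply Finset.filter_congr
      intro i _
      simp only [ne_eq]
      omega
  have hnofix : ∀ x ∈ {x : Fin v → ℤ | ∀ i, x i = 0 ∨ x i = 1},
      (fun i => 1 - x i) ≠ x ∧ ¬ cuAdj u x (fun i => 1 - x i) := by
    intro x hx
    have hall : ∀ i, x i ≠ 1 - x i := by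
      intro i
      rcases hx i with h | h <;> simp [h]
    constructor
    · intro h
      exact hall ⟨0, by omega⟩ (congrFun h ⟨0, by omega⟩).symm
    · rintro ⟨-, -, hc⟩
      have : (Finset.univ.filter fun i => x i ≠ (fun i => 1 - x i) i).card = v := by
        rw [Finset.filter_true_of_mem (fun i _ => hall i)]
        simp
      omega
  exact ⟨hmaps, hcont, hnofix, fun H => by
    obtain ⟨x, hx, h⟩ := H _ hmaps hcont
    rcases h with h | h
    · exact (hnofix x hx).1 h
    · exact (hnofix x hx).2 h⟩
end
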